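/- arXiv:1305.0341 — 6 statements merged into one kernel-verified Lean document; each statement's English description precedes it below -/
import Mathlib

section
/- Let θ : ℝ → ℝ be differentiable and set n₁(s) = cosh θ(s)·N(s) + sinh θ(s)·B(s). Then n₁'(s) is a scalar multiple of T(s) for every s if and only if θ'(s) = −τ(s) for every s; equivalently, if and only if θ(s) = θ(0) − ∫₀ˢ τ(σ) dσ for all s. -/
noncomputable section

/-- Lorentzian inner product on Minkowski 3-space `ℝ₁³`. -/
def minkDot (X Y : ℝ × ℝ × ℝ) : ℝ := X.1 * Y.1 + X.2.1 * Y.2.1 - X.2.2 * Y.2.2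

/-- Lorentzian vector product on Minkowski 3-space `ℝ₁³`. -/
def lcross (X Y : ℝ × ℝ × ℝ) : ℝ × ℝ × ℝ :=
  (X.2.1 * Y.2.2 - X.2.2 * Y.2.1, X.2.2 * Y.1 - X.1 * Y.2.2, X.2.1 * Y.1 - X.1 * Y.2.1)

/-- Lorentzian norm `‖X‖ = √|⟨X,X⟩|`. -/
def mnorm (X : ℝ × ℝ × ℝ) : ℝ := Real.sqrt |minkDot X X|

lemma minkDot_add_left' (X Y Z : ℝ × ℝ × ℝ) :
    minkDot (X + Y) Z = minkDot X Z + minkDot Y Z := by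
  simp [minkDot]; ring

lemma minkDot_smul_left' (a : ℝ) (X Z : ℝ × ℝ × ℝ) :
    minkDot (a • X) Z = a * minkDot X Z := by
  simp [minkDot]; ring

lemma deriv_n1_key (T N B : ℝ → ℝ × ℝ × ℝ) (κ τ : ℝ → ℝ)
    (hN : ContDiff ℝ (⊤ : ℕ∞) N) (hB : ContDiff ℝ (⊤ : ℕ∞) B)
    (hN' : ∀ s, deriv N s = κ s • T s + τ s • B s)
    (hB' : ∀ s, deriv B s = τ s • N s)
    (θ : ℝ → ℝ) (hθ : Differentiable ℝ θ)
    (n₁ : ℝ → ℝ × ℝ × ℝ)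
    (hn₁ : ∀ s, n₁ s = Real.cosh (θ s) • N s + Real.sinh (θ s) • B s) (s : ℝ) :
    deriv n₁ s = (κ s * Real.cosh (θ s)) • T s
      + ((deriv θ s + τ s) * Real.sinh (θ s)) • N s
      + ((deriv θ s + τ s) * Real.cosh (θ s)) • B s := by
  have hNd : HasDerivAt N (κ s • T s + τ s • B s) s := by
    have := (hN.differentiable (by simp) s).hasDerivAt
    rwa [hN' s] at this
  have hBd : HasDerivAt B (τ s • N s) s := by
    have := (hB.differentiable (by simp) s).hasDerivAt
    rwa [hB' s] at this
  have hc : HasDerivAt (fun x => Real.cosh (θ x)) (Real.sinh (θ s) * deriv θ s) s :=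
    ((hθ s).hasDerivAt).cosh
  have hs : HasDerivAt (fun x => Real.sinh (θ x)) (Real.cosh (θ s) * deriv θ s) s :=
    ((hθ s).hasDerivAt).sinh
  have h := ((hc.smul hNd).add (hs.smul hBd)).congr_of_eventuallyEq
    (Filter.Eventually.of_forall fun x => (hn₁ x))
  rw [h.deriv]
  module

/-- The rotated normal field `n₁` has derivative parallel to `T` iff `θ' = -τ`,
equivalently iff `θ(s) = θ(0) - ∫₀ˢ τ`. -/
theorem rotated_normal_parallel_tangent_spacelike_timelikeNormal
    (r T N B : ℝ → ℝ × ℝ × ℝ) (κ τ : ℝ → ℝ)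
    (hr : ContDiff ℝ (⊤ : ℕ∞) r) (hT : ContDiff ℝ (⊤ : ℕ∞) T) (hN : ContDiff ℝ (⊤ : ℕ∞) N)
    (hB : ContDiff ℝ (⊤ : ℕ∞) B) (hκ : ContDiff ℝ (⊤ : ℕ∞) κ) (hτ : ContDiff ℝ (⊤ : ℕ∞) τ)
    (hrT : ∀ s, deriv r s = T s)
    (hT' : ∀ s, deriv T s = κ s • N s)
    (hN' : ∀ s, deriv N s = κ s • T s + τ s • B s)
    (hB' : ∀ s, deriv B s = τ s • N s)
    (hTT : ∀ s, minkDot (T s) (T s) = 1)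
    (hNN : ∀ s, minkDot (N s) (N s) = -1)
    (hBB : ∀ s, minkDot (B s) (B s) = 1)
    (hTN : ∀ s, minkDot (T s) (N s) = 0)
    (hTB : ∀ s, minkDot (T s) (B s) = 0)
    (hNB : ∀ s, minkDot (N s) (B s) = 0)
    (θ : ℝ → ℝ) (hθ : Differentiable ℝ θ)
    (n₁ : ℝ → ℝ × ℝ × ℝ)
    (hn₁ : ∀ s, n₁ s = Real.cosh (θ s) • N s + Real.sinh (θ s) • B s) :
    ((∀ s, ∃ c : ℝ, deriv n₁ s = c • T s) ↔ (∀ s, deriv θ s = -τ s)) ∧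
    ((∀ s, ∃ c : ℝ, deriv n₁ s = c • T s) ↔ (∀ s, θ s = θ 0 - ∫ σ in (0:ℝ)..s, τ σ)) := by
  have key := deriv_n1_key T N B κ τ hN hB hN' hB' θ hθ n₁ hn₁
  have main : (∀ s, ∃ c : ℝ, deriv n₁ s = c • T s) ↔ (∀ s, deriv θ s = -τ s) := by
    constructor
    · intro h s
      obtain ⟨c, hc⟩ := h s
      rw [key s] at hc
      have h2 := congrArg (fun X => minkDot X (B s)) hc
      simp only [minkDot_add_left', minkDot_smul_left', hTB s, hNB s, hBB s,
        mul_zero, mul_one, add_zero, zero_add] at h2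
      have hcosh := Real.cosh_pos (θ s)
      have : deriv θ s + τ s = 0 := by
        rcases mul_eq_zero.1 h2 with h3 | h3
        · exact h3
        · linarith
      linarith
    · intro h s
      refine ⟨κ s * Real.cosh (θ s), ?_⟩
      rw [key s, h s]
      module
  have ftc : (∀ s, deriv θ s = -τ s) ↔ (∀ s, θ s = θ 0 - ∫ σ in (0:ℝ)..s, τ σ) := by
    constructor
    · intro h s
      have hint : IntervalIntegrable (fun t => -τ t) MeasureTheory.volume 0 s :=
        (hτ.continuous.neg).intervalIntegrable 0 s
      have hder : ∀ t ∈ Set.uIcc (0:ℝ) s, HasDerivAt θ (-τ t) t := by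
        intro t _
        have := (hθ t).hasDerivAt
        rwa [h t] at this
      have := intervalIntegral.integral_eq_sub_of_hasDerivAt hder hint
      rw [intervalIntegral.integral_neg] at this
      linarith
    · intro h s
      have hθeq : θ = fun u => θ 0 - ∫ σ in (0:ℝ)..u, τ σ := funext h
      have hF : HasDerivAt (fun u => ∫ σ in (0:ℝ)..u, τ σ) (τ s) s :=
        intervalIntegral.integral_hasDerivAt_right (hτ.continuous.intervalIntegrable 0 s)
          hτ.continuous.aestronglyMeasurable.stronglyMeasurableAtFilter
          hτ.continuous.continuousAt
      have hd := (hasDerivAt_const s (θ 0)).sub hF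
      rw [hθeq, show (fun u => θ 0 - ∫ σ in (0:ℝ)..u, τ σ) = (fun x => θ 0) - fun u => ∫ σ in (0:ℝ)..u, τ σ from rfl, hd.deriv]
      ring
  exact ⟨main, main.trans ftc⟩
end
end

section
/- Suppose u(s,t₀) = v(s,t₀) = w(s,t₀) = 0 for all s (so r(s) = P(s,t₀) is a parametric curve on the surface), let θ₀ ∈ ℝ, θ(s) = θ₀ − ∫₀ˢ τ(σ) dσ, and n₁(s) = cosh θ(s)·N(s) + sinh θ(s)·B(s). Then n₁(s) is parallel to the surface normal n(s,t₀) for every s (for each s there exists c ≠ 0 with n(s,t₀) = c·n₁(s)) if and only if there exists λ : ℝ → ℝ with λ(s) ≠ 0 for all s such that for all s: φ₁(s) = 0, φ₂(s) = λ(s)·cosh θ(s), φ₃(s) = λ(s)·sinh θ(s), where φ₁ = v_s w_t − w_s v_t, φ₂ = (1 + u_s)w_t − w_s u_t, φ₃ = (1 + u_s)v_t − v_s u_t, with partial derivatives evaluated at (s,t₀). -/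
noncomputable section

lemma minkDot_comb (a b : ℝ) (X Y Z : ℝ × ℝ × ℝ) :
    minkDot (a • X + b • Y) Z = a * minkDot X Z + b * minkDot Y Z := by
  simp only [minkDot, Prod.fst_add, Prod.snd_add, Prod.smul_fst, Prod.smul_snd, smul_eq_mul]
  ring

lemma lcross_comb (a b c : ℝ) (X Y Z W : ℝ × ℝ × ℝ) :
    lcross X (a • Y + b • Z + c • W)
      = a • lcross X Y + b • lcross X Z + c • lcross X W := by
  simp only [lcross, Prod.ext_iff, Prod.fst_add, Prod.snd_add, Prod.smul_fst, Prod.smul_snd,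
    smul_eq_mul]
  refine ⟨by ring, by ring, by ring⟩

lemma lcross_self (X : ℝ × ℝ × ℝ) : lcross X X = 0 := by
  simp only [lcross, Prod.ext_iff, Prod.fst_zero, Prod.snd_zero]
  refine ⟨by ring, by ring, by ring⟩

lemma lcross_skew (X Y : ℝ × ℝ × ℝ) : lcross X Y = -lcross Y X := by
  simp only [lcross, Prod.ext_iff, Prod.fst_neg, Prod.snd_neg]
  refine ⟨by ring, by ring, by ring⟩

/-- The curve is a line of curvature iff the marching-scale functions satisfy the
`φ`-conditions with a nonvanishing function `λ`. -/
theorem line_of_curvature_iff_spacelike_timelikeNormal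
    (r T N B : ℝ → ℝ × ℝ × ℝ) (κ τ : ℝ → ℝ)
    (hr : ContDiff ℝ (⊤ : ℕ∞) r) (hT : ContDiff ℝ (⊤ : ℕ∞) T) (hN : ContDiff ℝ (⊤ : ℕ∞) N)
    (hB : ContDiff ℝ (⊤ : ℕ∞) B) (hκ : ContDiff ℝ (⊤ : ℕ∞) κ) (hτ : ContDiff ℝ (⊤ : ℕ∞) τ)
    (hrT : ∀ s, deriv r s = T s)
    (hT' : ∀ s, deriv T s = κ s • N s)
    (hN' : ∀ s, deriv N s = κ s • T s + τ s • B s)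
    (hB' : ∀ s, deriv B s = τ s • N s)
    (hTT : ∀ s, minkDot (T s) (T s) = 1)
    (hNN : ∀ s, minkDot (N s) (N s) = -1)
    (hBB : ∀ s, minkDot (B s) (B s) = 1)
    (hTN : ∀ s, minkDot (T s) (N s) = 0)
    (hTB : ∀ s, minkDot (T s) (B s) = 0)
    (hNB : ∀ s, minkDot (N s) (B s) = 0)
    (hTxN : ∀ s, lcross (T s) (N s) = B s)
    (hNxB : ∀ s, lcross (N s) (B s) = T s)
    (hBxT : ∀ s, lcross (B s) (T s) = -N s)
    (u v w : ℝ → ℝ → ℝ)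
    (hu : ContDiff ℝ (⊤ : ℕ∞) (Function.uncurry u))
    (hv : ContDiff ℝ (⊤ : ℕ∞) (Function.uncurry v))
    (hw : ContDiff ℝ (⊤ : ℕ∞) (Function.uncurry w))
    (t₀ : ℝ) (P n : ℝ → ℝ → ℝ × ℝ × ℝ)
    (hP : ∀ s t, P s t = r s + u s t • T s + v s t • N s + w s t • B s)
    (hn : ∀ s t, n s t = lcross (deriv (fun σ => P σ t) s) (deriv (fun t' => P s t') t))
    (h0 : ∀ s, u s t₀ = 0 ∧ v s t₀ = 0 ∧ w s t₀ = 0)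
    (θ₀ : ℝ) (θ : ℝ → ℝ) (hθ : ∀ s, θ s = θ₀ - ∫ σ in (0:ℝ)..s, τ σ)
    (n₁ : ℝ → ℝ × ℝ × ℝ)
    (hn₁ : ∀ s, n₁ s = Real.cosh (θ s) • N s + Real.sinh (θ s) • B s) :
    (∀ s, ∃ c : ℝ, c ≠ 0 ∧ n s t₀ = c • n₁ s) ↔
      (∃ lam : ℝ → ℝ, (∀ s, lam s ≠ 0) ∧ ∀ s,
        (deriv (fun σ => v σ t₀) s * deriv (fun t => w s t) t₀ - deriv (fun σ => w σ t₀) s * deriv (fun t => v s t) t₀) = 0 ∧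
        ((1 + deriv (fun σ => u σ t₀) s) * deriv (fun t => w s t) t₀ - deriv (fun σ => w σ t₀) s * deriv (fun t => u s t) t₀) = lam s * Real.cosh (θ s) ∧
        ((1 + deriv (fun σ => u σ t₀) s) * deriv (fun t => v s t) t₀ - deriv (fun σ => v σ t₀) s * deriv (fun t => u s t) t₀) = lam s * Real.sinh (θ s)) := by
  -- abbreviations for the t-derivatives
  set ut : ℝ → ℝ := fun s => deriv (fun t => u s t) t₀ with hut
  set vt : ℝ → ℝ := fun s => deriv (fun t => v s t) t₀ with hvt
  set wt : ℝ → ℝ := fun s => deriv (fun t => w s t) t₀ with hwt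
  -- the s-derivatives of u,v,w along t = t₀ vanish
  have hus : ∀ s, deriv (fun σ => u σ t₀) s = 0 := by
    intro s
    have : (fun σ => u σ t₀) = fun _ => (0 : ℝ) := funext fun σ => (h0 σ).1
    rw [this]; simp
  have hvs : ∀ s, deriv (fun σ => v σ t₀) s = 0 := by
    intro s
    have : (fun σ => v σ t₀) = fun _ => (0 : ℝ) := funext fun σ => (h0 σ).2.1
    rw [this]; simp
  have hws : ∀ s, deriv (fun σ => w σ t₀) s = 0 := by
    intro s
    have : (fun σ => w σ t₀) = fun _ => (0 : ℝ) := funext fun σ => (h0 σ).2.2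
    rw [this]; simp
  -- differentiability in t
  have hdiff : ∀ (f : ℝ → ℝ → ℝ), ContDiff ℝ (⊤ : ℕ∞) (Function.uncurry f) →
      ∀ s, DifferentiableAt ℝ (fun t => f s t) t₀ := by
    intro f hf s
    have h1 : DifferentiableAt ℝ (Function.uncurry f) (s, t₀) :=
      (hf.differentiable (by simp)) (s, t₀)
    have h2 : DifferentiableAt ℝ (fun t : ℝ => (s, t)) t₀ :=
      DifferentiableAt.prodMk (differentiableAt_const s) differentiableAt_id
    exact h1.comp t₀ h2
  -- the s-partial of P at (s, t₀) is T s
  have hPs : ∀ s, deriv (fun σ => P σ t₀) s = T s := by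
    intro s
    have : (fun σ => P σ t₀) = r := by
      funext σ
      rw [hP σ t₀, (h0 σ).1, (h0 σ).2.1, (h0 σ).2.2]
      simp
    rw [this, hrT]
  -- the t-partial of P at (s, t₀)
  have hPt : ∀ s, deriv (fun t => P s t) t₀ = ut s • T s + vt s • N s + wt s • B s := by
    intro s
    have h1 : HasDerivAt (fun t => u s t) (ut s) t₀ := (hdiff u hu s).hasDerivAt
    have h2 : HasDerivAt (fun t => v s t) (vt s) t₀ := (hdiff v hv s).hasDerivAt
    have h3 : HasDerivAt (fun t => w s t) (wt s) t₀ := (hdiff w hw s).hasDerivAt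
    have hD : HasDerivAt (fun t => r s + u s t • T s + v s t • N s + w s t • B s)
        (ut s • T s + vt s • N s + wt s • B s) t₀ :=
      (((h1.smul_const (T s)).const_add (r s)).add (h2.smul_const (N s))).add
        (h3.smul_const (B s))
    have heq : (fun t => P s t) = fun t => r s + u s t • T s + v s t • N s + w s t • B s :=
      funext fun t => hP s t
    rw [heq]
    exact hD.deriv
  -- the surface normal along t = t₀
  have hns : ∀ s, n s t₀ = wt s • N s + vt s • B s := by
    intro s
    rw [hn s t₀, hPs s, hPt s, lcross_comb, lcross_self, hTxN s]
    have hTB : lcross (T s) (B s) = N s := by rw [lcross_skew, hBxT s]; simp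
    rw [hTB]
    simp only [smul_zero, zero_add]
    abel
  constructor
  · intro h
    refine ⟨fun s => (h s).choose, fun s => (h s).choose_spec.1, fun s => ?_⟩
    obtain ⟨hc0, heq⟩ := (h s).choose_spec
    set c := (h s).choose
    have heq' : wt s • N s + vt s • B s
        = (c * Real.cosh (θ s)) • N s + (c * Real.sinh (θ s)) • B s := by
      rw [← hns s, heq, hn₁ s, smul_add, smul_smul, smul_smul]
    have e1 := congrArg (fun X => minkDot X (N s)) heq'
    have e2 := congrArg (fun X => minkDot X (B s)) heq'
    simp only [minkDot_comb] at e1 e2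
    have hBN : minkDot (B s) (N s) = 0 := by
      have := hNB s; simp only [minkDot] at this ⊢; linarith
    rw [hNN s, hBN] at e1
    rw [hNB s, hBB s] at e2
    have ew : wt s = c * Real.cosh (θ s) := by linarith
    have ev : vt s = c * Real.sinh (θ s) := by linarith
    refine ⟨by rw [hvs s, hws s]; ring, ?_, ?_⟩
    · rw [hus s, hws s]
      show (1 + (0:ℝ)) * wt s - 0 * ut s = c * Real.cosh (θ s)
      rw [ew]; ring
    · rw [hus s, hvs s]
      show (1 + (0:ℝ)) * vt s - 0 * ut s = c * Real.sinh (θ s)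
      rw [ev]; ring
  · rintro ⟨lam, hlam0, hlam⟩ s
    obtain ⟨-, e2, e3⟩ := hlam s
    rw [hus s, hws s] at e2
    rw [hus s, hvs s] at e3
    have ew : wt s = lam s * Real.cosh (θ s) := by
      have h2 : (1 + (0:ℝ)) * wt s - 0 * ut s = lam s * Real.cosh (θ s) := e2
      linarith
    have ev : vt s = lam s * Real.sinh (θ s) := by
      have h3 : (1 + (0:ℝ)) * vt s - 0 * ut s = lam s * Real.sinh (θ s) := e3
      linarith
    refine ⟨lam s, hlam0 s, ?_⟩
    rw [hns s, hn₁ s, ew, ev, smul_add, smul_smul, smul_smul]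
end
end

section
/- Suppose the marching-scale functions satisfy u(s,t₀) = v(s,t₀) = w(s,t₀) = 0 for all s. Then for every s the surface normal satisfies n(s,t₀) = φ₁(s)T(s) + φ₂(s)N(s) + φ₃(s)B(s), where φ₁(s) = v_s w_t − w_s v_t, φ₂(s) = −(1 + u_s)w_t + w_s u_t, φ₃(s) = −(1 + u_s)v_t + v_s u_t, with all partial derivatives evaluated at (s,t₀). -/
noncomputable section

lemma lcross_comb_s8 (X Y Z : ℝ × ℝ × ℝ) (hXY : lcross X Y = -Z) (hYZ : lcross Y Z = X)
    (hZX : lcross Z X = Y) (p q r p' q' r' : ℝ) :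
    lcross (p • X + q • Y + r • Z) (p' • X + q' • Y + r' • Z)
      = (q * r' - r * q') • X + (-(p * r') + r * p') • Y + (-(p * q') + q * p') • Z := by
  obtain ⟨x1, x2, x3⟩ := X
  obtain ⟨y1, y2, y3⟩ := Y
  obtain ⟨z1, z2, z3⟩ := Z
  simp only [lcross, Prod.smul_mk, Prod.mk_add_mk, Prod.neg_mk, Prod.mk.injEq, smul_eq_mul] at *
  obtain ⟨a1, a2, a3⟩ := hXY
  obtain ⟨b1, b2, b3⟩ := hYZ
  obtain ⟨c1, c2, c3⟩ := hZX
  refine ⟨?_, ?_, ?_⟩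
  · linear_combination (p*q'-q*p') * a1 + (r*p'-p*r') * c1 + (q*r'-r*q') * b1
  · linear_combination (p*q'-q*p') * a2 + (r*p'-p*r') * c2 + (q*r'-r*q') * b2
  · linear_combination (p*q'-q*p') * a3 + (r*p'-p*r') * c3 + (q*r'-r*q') * b3

/-- Decomposition of the surface normal along the curve in the Frenet frame. -/
theorem normal_decomposition_spacelike_timelikeBinormal
    (r T N B : ℝ → ℝ × ℝ × ℝ) (κ τ : ℝ → ℝ)
    (hr : ContDiff ℝ (⊤ : ℕ∞) r) (hT : ContDiff ℝ (⊤ : ℕ∞) T) (hN : ContDiff ℝ (⊤ : ℕ∞) N)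
    (hB : ContDiff ℝ (⊤ : ℕ∞) B) (hκ : ContDiff ℝ (⊤ : ℕ∞) κ) (hτ : ContDiff ℝ (⊤ : ℕ∞) τ)
    (hrT : ∀ s, deriv r s = T s)
    (hT' : ∀ s, deriv T s = κ s • N s)
    (hN' : ∀ s, deriv N s = (-κ s) • T s + τ s • B s)
    (hB' : ∀ s, deriv B s = τ s • N s)
    (hTT : ∀ s, minkDot (T s) (T s) = 1)
    (hNN : ∀ s, minkDot (N s) (N s) = 1)
    (hBB : ∀ s, minkDot (B s) (B s) = -1)
    (hTN : ∀ s, minkDot (T s) (N s) = 0)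
    (hTB : ∀ s, minkDot (T s) (B s) = 0)
    (hNB : ∀ s, minkDot (N s) (B s) = 0)
    (hTxN : ∀ s, lcross (T s) (N s) = -B s)
    (hNxB : ∀ s, lcross (N s) (B s) = T s)
    (hBxT : ∀ s, lcross (B s) (T s) = N s)
    (u v w : ℝ → ℝ → ℝ)
    (hu : ContDiff ℝ (⊤ : ℕ∞) (Function.uncurry u))
    (hv : ContDiff ℝ (⊤ : ℕ∞) (Function.uncurry v))
    (hw : ContDiff ℝ (⊤ : ℕ∞) (Function.uncurry w))
    (t₀ : ℝ) (P n : ℝ → ℝ → ℝ × ℝ × ℝ)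
    (hP : ∀ s t, P s t = r s + u s t • T s + v s t • N s + w s t • B s)
    (hn : ∀ s t, n s t = lcross (deriv (fun σ => P σ t) s) (deriv (fun t' => P s t') t))
    (h0 : ∀ s, u s t₀ = 0 ∧ v s t₀ = 0 ∧ w s t₀ = 0) :
    ∀ s,
      n s t₀ = (deriv (fun σ => v σ t₀) s * deriv (fun t => w s t) t₀ - deriv (fun σ => w σ t₀) s * deriv (fun t => v s t) t₀) • T s + (-((1 + deriv (fun σ => u σ t₀) s) * deriv (fun t => w s t) t₀) + deriv (fun σ => w σ t₀) s * deriv (fun t => u s t) t₀) • N s + (-((1 + deriv (fun σ => u σ t₀) s) * deriv (fun t => v s t) t₀) + deriv (fun σ => v σ t₀) s * deriv (fun t => u s t) t₀) • B s := by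
  intro s
  have hrd := hr.differentiable (by simp)
  have hTd := hT.differentiable (by simp)
  have hNd := hN.differentiable (by simp)
  have hBd := hB.differentiable (by simp)
  -- differentiability of sections
  have hu1 : Differentiable ℝ (fun σ => u σ t₀) :=
    (hu.differentiable (by simp)).comp (differentiable_id.prodMk (differentiable_const t₀))
  have hv1 : Differentiable ℝ (fun σ => v σ t₀) :=
    (hv.differentiable (by simp)).comp (differentiable_id.prodMk (differentiable_const t₀))
  have hw1 : Differentiable ℝ (fun σ => w σ t₀) :=
    (hw.differentiable (by simp)).comp (differentiable_id.prodMk (differentiable_const t₀))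
  have hu2 : Differentiable ℝ (fun t => u s t) :=
    (hu.differentiable (by simp)).comp ((differentiable_const s).prodMk differentiable_id)
  have hv2 : Differentiable ℝ (fun t => v s t) :=
    (hv.differentiable (by simp)).comp ((differentiable_const s).prodMk differentiable_id)
  have hw2 : Differentiable ℝ (fun t => w s t) :=
    (hw.differentiable (by simp)).comp ((differentiable_const s).prodMk differentiable_id)
  obtain ⟨hu0, hv0, hw0⟩ := h0 s
  set a := deriv (fun σ => u σ t₀) s with ha
  set b := deriv (fun σ => v σ t₀) s with hb
  set c := deriv (fun σ => w σ t₀) s with hc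
  set a' := deriv (fun t => u s t) t₀ with ha'
  set b' := deriv (fun t => v s t) t₀ with hb'
  set c' := deriv (fun t => w s t) t₀ with hc'
  -- partial derivative in s
  have hPs : deriv (fun σ => P σ t₀) s
      = (1 + a) • T s + b • N s + c • B s := by
    have heq : (fun σ => P σ t₀)
        = fun σ => r σ + (u σ t₀) • T σ + (v σ t₀) • N σ + (w σ t₀) • B σ :=
      funext fun σ => hP σ t₀
    rw [heq]
    have d1 : DifferentiableAt ℝ (fun σ => (u σ t₀) • T σ) s := (hu1 s).smul (hTd s)
    have d2 : DifferentiableAt ℝ (fun σ => (v σ t₀) • N σ) s := (hv1 s).smul (hNd s)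
    have d3 : DifferentiableAt ℝ (fun σ => (w σ t₀) • B σ) s := (hw1 s).smul (hBd s)
    rw [deriv_fun_add (((hrd s).fun_add d1).fun_add d2) d3, deriv_fun_add ((hrd s).fun_add d1) d2,
      deriv_fun_add (hrd s) d1, deriv_fun_smul (hu1 s) (hTd s), deriv_fun_smul (hv1 s) (hNd s),
      deriv_fun_smul (hw1 s) (hBd s), hrT s, hu0, hv0, hw0]
    simp only [zero_smul, add_zero, ← ha, ← hb, ← hc, add_smul, one_smul]
    abel
  -- partial derivative in t
  have hPt : deriv (fun t' => P s t') t₀ = a' • T s + b' • N s + c' • B s := by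
    have heq : (fun t' => P s t')
        = fun t' => r s + ((u s t') • T s + ((v s t') • N s + (w s t') • B s)) := by
      funext t'
      rw [hP s t']
      abel
    rw [heq]
    have d1 : DifferentiableAt ℝ (fun t' => (u s t') • T s) t₀ :=
      (hu2 t₀).smul_const (T s)
    have d2 : DifferentiableAt ℝ (fun t' => (v s t') • N s) t₀ :=
      (hv2 t₀).smul_const (N s)
    have d3 : DifferentiableAt ℝ (fun t' => (w s t') • B s) t₀ :=
      (hw2 t₀).smul_const (B s)
    rw [deriv_const_add, deriv_fun_add d1 (d2.fun_add d3), deriv_fun_add d2 d3,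
      deriv_smul_const (hu2 t₀), deriv_smul_const (hv2 t₀), deriv_smul_const (hw2 t₀)]
    abel
  rw [hn s t₀, hPs, hPt,
    lcross_comb_s8 (T s) (N s) (B s) (hTxN s) (hNxB s) (hBxT s) (1 + a) b c a' b' c']
end
end

section
/- Let p ≥ 1, let a_{1k}, a_{2k}, a_{3k} ∈ ℝ, let l, m, q, U, V, W : ℝ → ℝ and f, g, h : ℝ → ℝ be C¹ functions with f(0) = g(0) = h(0) = 0, and define u(s,t) = f(Σ_{k=1}^p a_{1k} l(s)^k U(t)^k), v(s,t) = g(Σ_{k=1}^p a_{2k} m(s)^k V(t)^k), w(s,t) = h(Σ_{k=1}^p a_{3k} q(s)^k W(t)^k). Suppose U(t₀) = V(t₀) = W(t₀) = 0, θ(s) = θ₀ − ∫₀ˢ τ(σ) dσ, and there is λ : ℝ → ℝ with λ(s) ≠ 0 such that g'(0)·a_{21} m(s) V'(t₀) = −λ(s) sinh θ(s) and h'(0)·a_{31} q(s) W'(t₀) = −λ(s) cosh θ(s) for all s. Then P(s,t₀) = r(s) for all s and the surface normal satisfies n(s,t₀) = λ(s)·(cosh θ(s)·N(s) + sinh θ(s)·B(s))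 for all s. -/
noncomputable section

lemma lcross_antisymm (X Y : ℝ × ℝ × ℝ) : lcross X Y = - lcross Y X := by
  simp only [lcross, Prod.neg_mk, Prod.mk.injEq]
  refine ⟨by ring, by ring, by ring⟩

lemma lcross_expand (X Y Z : ℝ × ℝ × ℝ) (a b c : ℝ) :
    lcross X (a • X + b • Y + c • Z) = b • lcross X Y + c • lcross X Z := by
  simp only [lcross, Prod.smul_mk, Prod.mk_add_mk, smul_eq_mul, Prod.smul_def,
    Prod.fst_add, Prod.snd_add, Prod.smul_fst, Prod.smul_snd, Prod.mk.injEq]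
  refine ⟨by ring, by ring, by ring⟩

lemma key_hasDerivAt (p : ℕ) (hp : 1 ≤ p) (a : ℕ → ℝ) (c : ℝ)
    (F φ : ℝ → ℝ) (hF : ContDiff ℝ 1 F) (hφ : ContDiff ℝ 1 φ)
    (t₀ : ℝ) (hF0 : F t₀ = 0) :
    HasDerivAt (fun t => φ (∑ k ∈ Finset.Icc 1 p, a k * c ^ k * F t ^ k))
      (deriv φ 0 * (a 1 * c * deriv F t₀)) t₀ := by
  have hFd : HasDerivAt F (deriv F t₀) t₀ :=
    (hF.differentiable one_ne_zero t₀).hasDerivAt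
  have hS : HasDerivAt (fun t => ∑ k ∈ Finset.Icc 1 p, a k * c ^ k * F t ^ k)
      (∑ k ∈ Finset.Icc 1 p, a k * c ^ k * ((k : ℝ) * F t₀ ^ (k - 1) * deriv F t₀)) t₀ := by
    apply HasDerivAt.fun_sum
    intro k _
    exact (hFd.pow k).const_mul _
  have hsum : (∑ k ∈ Finset.Icc 1 p, a k * c ^ k * ((k : ℝ) * F t₀ ^ (k - 1) * deriv F t₀))
      = a 1 * c * deriv F t₀ := by
    rw [Finset.sum_eq_single 1]
    · simp
    · intro k hk hne
      have h2 : 2 ≤ k := by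
        have := (Finset.mem_Icc.mp hk).1; omega
      have hz : F t₀ ^ (k - 1) = 0 := by
        rw [hF0]; exact zero_pow (by omega)
      simp [hz]
    · intro h1
      exact absurd (Finset.mem_Icc.mpr ⟨le_refl 1, hp⟩) h1
  have hS0 : (∑ k ∈ Finset.Icc 1 p, a k * c ^ k * F t₀ ^ k) = 0 := by
    apply Finset.sum_eq_zero
    intro k hk
    have h1 : 1 ≤ k := (Finset.mem_Icc.mp hk).1
    rw [hF0, zero_pow (by omega), mul_zero]
  have hφd : HasDerivAt φ (deriv φ 0)
      (∑ k ∈ Finset.Icc 1 p, a k * c ^ k * F t₀ ^ k) := by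
    rw [hS0]; exact (hφ.differentiable one_ne_zero 0).hasDerivAt
  have hcomp := hφd.comp t₀ hS
  rw [hsum] at hcomp
  exact hcomp

/-- Sufficient conditions in the composed form of the marching-scale functions. -/
theorem surface_pencil_composed_spacelike_timelikeBinormal
    (r T N B : ℝ → ℝ × ℝ × ℝ) (κ τ : ℝ → ℝ)
    (hr : ContDiff ℝ (⊤ : ℕ∞) r) (hT : ContDiff ℝ (⊤ : ℕ∞) T) (hN : ContDiff ℝ (⊤ : ℕ∞) N)
    (hB : ContDiff ℝ (⊤ : ℕ∞) B) (hκ : ContDiff ℝ (⊤ : ℕ∞) κ) (hτ : ContDiff ℝ (⊤ : ℕ∞) τ)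
    (hrT : ∀ s, deriv r s = T s)
    (hT' : ∀ s, deriv T s = κ s • N s)
    (hN' : ∀ s, deriv N s = (-κ s) • T s + τ s • B s)
    (hB' : ∀ s, deriv B s = τ s • N s)
    (hTT : ∀ s, minkDot (T s) (T s) = 1)
    (hNN : ∀ s, minkDot (N s) (N s) = 1)
    (hBB : ∀ s, minkDot (B s) (B s) = -1)
    (hTN : ∀ s, minkDot (T s) (N s) = 0)
    (hTB : ∀ s, minkDot (T s) (B s) = 0)
    (hNB : ∀ s, minkDot (N s) (B s) = 0)
    (hTxN : ∀ s, lcross (T s) (N s) = -B s)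
    (hNxB : ∀ s, lcross (N s) (B s) = T s)
    (hBxT : ∀ s, lcross (B s) (T s) = N s)
    (u v w : ℝ → ℝ → ℝ)
    (t₀ : ℝ) (P n : ℝ → ℝ → ℝ × ℝ × ℝ)
    (hP : ∀ s t, P s t = r s + u s t • T s + v s t • N s + w s t • B s)
    (hn : ∀ s t, n s t = lcross (deriv (fun σ => P σ t) s) (deriv (fun t' => P s t') t))
    (p : ℕ) (hp : 1 ≤ p)
    (a1 a2 a3 : ℕ → ℝ)
    (l m q U V W f g h : ℝ → ℝ)
    (hl : ContDiff ℝ 1 l) (hm : ContDiff ℝ 1 m) (hq : ContDiff ℝ 1 q)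
    (hU : ContDiff ℝ 1 U) (hV : ContDiff ℝ 1 V) (hW : ContDiff ℝ 1 W)
    (hf : ContDiff ℝ 1 f) (hg : ContDiff ℝ 1 g) (hh : ContDiff ℝ 1 h)
    (hf0 : f 0 = 0) (hg0 : g 0 = 0) (hh0 : h 0 = 0)
    (hu : ∀ s t, u s t = f (∑ k ∈ Finset.Icc 1 p, a1 k * l s ^ k * U t ^ k))
    (hv : ∀ s t, v s t = g (∑ k ∈ Finset.Icc 1 p, a2 k * m s ^ k * V t ^ k))
    (hw : ∀ s t, w s t = h (∑ k ∈ Finset.Icc 1 p, a3 k * q s ^ k * W t ^ k))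
    (hU0 : U t₀ = 0) (hV0 : V t₀ = 0) (hW0 : W t₀ = 0)
    (θ₀ : ℝ) (θ : ℝ → ℝ) (hθ : ∀ s, θ s = θ₀ - ∫ σ in (0:ℝ)..s, τ σ)
    (lam : ℝ → ℝ) (hlam : ∀ s, lam s ≠ 0)
    (hV' : ∀ s, deriv g 0 * (a2 1 * m s * deriv V t₀) = -(lam s * Real.sinh (θ s)))
    (hW' : ∀ s, deriv h 0 * (a3 1 * q s * deriv W t₀) = -(lam s * Real.cosh (θ s))) :
    ∀ s, P s t₀ = r s ∧
      n s t₀ = lam s • (Real.cosh (θ s) • N s + Real.sinh (θ s) • B s) := by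
  have hzero : ∀ (a : ℕ → ℝ) (c : ℝ) (F : ℝ → ℝ), F t₀ = 0 →
      (∑ k ∈ Finset.Icc 1 p, a k * c ^ k * F t₀ ^ k) = 0 := by
    intro a c F hF0
    apply Finset.sum_eq_zero
    intro k hk
    have h1 : 1 ≤ k := (Finset.mem_Icc.mp hk).1
    rw [hF0, zero_pow (by omega), mul_zero]
  have hP0 : ∀ σ, P σ t₀ = r σ := by
    intro σ
    rw [hP, hu, hv, hw, hzero a1 (l σ) U hU0, hzero a2 (m σ) V hV0,
      hzero a3 (q σ) W hW0, hf0, hg0, hh0]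
    simp
  intro s
  refine ⟨hP0 s, ?_⟩
  have hds : deriv (fun σ => P σ t₀) s = T s := by
    have hfe : (fun σ => P σ t₀) = r := funext hP0
    rw [hfe, hrT]
  have hud : HasDerivAt (fun t => u s t) (deriv f 0 * (a1 1 * l s * deriv U t₀)) t₀ := by
    have := key_hasDerivAt p hp a1 (l s) U f hU hf t₀ hU0
    simpa only [hu] using this
  have hvd : HasDerivAt (fun t => v s t) (deriv g 0 * (a2 1 * m s * deriv V t₀)) t₀ := by
    have := key_hasDerivAt p hp a2 (m s) V g hV hg t₀ hV0
    simpa only [hv] using this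
  have hwd : HasDerivAt (fun t => w s t) (deriv h 0 * (a3 1 * q s * deriv W t₀)) t₀ := by
    have := key_hasDerivAt p hp a3 (q s) W h hW hh t₀ hW0
    simpa only [hw] using this
  have hPt : HasDerivAt (fun t => P s t)
      ((deriv f 0 * (a1 1 * l s * deriv U t₀)) • T s
        + (deriv g 0 * (a2 1 * m s * deriv V t₀)) • N s
        + (deriv h 0 * (a3 1 * q s * deriv W t₀)) • B s) t₀ := by
    have hfe : (fun t => P s t) = fun t => r s + u s t • T s + v s t • N s + w s t • B s :=
      funext (fun t => hP s t)
    rw [hfe]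
    exact (((hud.smul_const (T s)).const_add (r s)).add
      (hvd.smul_const (N s))).add (hwd.smul_const (B s))
  have hdt := hPt.deriv
  rw [hn, hds, hdt, lcross_expand, hTxN]
  have hTB : lcross (T s) (B s) = -(N s) := by rw [lcross_antisymm, hBxT]
  rw [hTB, hV' s, hW' s]
  module
end
end

section
/- Suppose u(s,t₀) = v(s,t₀) = w(s,t₀) = 0 for all s (so r(s) = P(s,t₀) is a parametric curve on the surface), let θ₀ ∈ ℝ, θ(s) = θ₀ + ∫₀ˢ τ(σ) dσ, and n₁(s) = cos θ(s)·N(s) + sin θ(s)·B(s). Then n₁(s) is parallel to the surface normal n(s,t₀) for every s (for each s there exists c ≠ 0 with n(s,t₀) = c·n₁(s)) if and only if there exists λ : ℝ → ℝ with λ(s) ≠ 0 for all s such that for all s: ψ₁(s) = 0, ψ₂(s) = λ(s)·cos θ(s), ψ₃(s) = λ(s)·sin θ(s), where ψ₁ = v_s w_t − w_s v_t, ψ₂ = (1 + u_s)w_t − w_s u_t, ψ₃ = v_s u_t − (1 + u_s)v_t, with partial derivatives evaluated at (s,t₀). -/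
noncomputable section

lemma lcross_expand_s15 (a b c a' b' c' : ℝ) (T N B : ℝ × ℝ × ℝ)
    (h1 : lcross T N = -B) (h2 : lcross N B = T) (h3 : lcross B T = -N) :
    lcross (a • T + b • N + c • B) (a' • T + b' • N + c' • B) =
      (b * c' - c * b') • T + (a * c' - c * a') • N + (b * a' - a * b') • B := by
  obtain ⟨T1, T2, T3⟩ := T; obtain ⟨N1, N2, N3⟩ := N; obtain ⟨B1, B2, B3⟩ := B
  simp only [lcross, Prod.mk_add_mk, Prod.smul_mk, smul_eq_mul, Prod.neg_mk,
    Prod.mk.injEq] at *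
  obtain ⟨h1a, h1b, h1c⟩ := h1
  obtain ⟨h2a, h2b, h2c⟩ := h2
  obtain ⟨h3a, h3b, h3c⟩ := h3
  refine ⟨?_, ?_, ?_⟩
  · linear_combination (a*b' - b*a') * h1a + (b*c' - c*b') * h2a + (c*a' - a*c') * h3a
  · linear_combination (a*b' - b*a') * h1b + (b*c' - c*b') * h2b + (c*a' - a*c') * h3b
  · linear_combination (a*b' - b*a') * h1c + (b*c' - c*b') * h2c + (c*a' - a*c') * h3c

lemma minkDot_expand (x y z : ℝ) (T N B V : ℝ × ℝ × ℝ) :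
    minkDot (x • T + y • N + z • B) V =
      x * minkDot T V + y * minkDot N V + z * minkDot B V := by
  obtain ⟨T1, T2, T3⟩ := T; obtain ⟨N1, N2, N3⟩ := N; obtain ⟨B1, B2, B3⟩ := B
  obtain ⟨V1, V2, V3⟩ := V
  simp only [minkDot, Prod.mk_add_mk, Prod.smul_mk, smul_eq_mul]
  ring

lemma minkDot_comm (X Y : ℝ × ℝ × ℝ) : minkDot X Y = minkDot Y X := by
  simp only [minkDot]; ring

lemma coeff_ext (T N B : ℝ × ℝ × ℝ)
    (hTT : minkDot T T = -1) (hNN : minkDot N N = 1) (hBB : minkDot B B = 1)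
    (hTN : minkDot T N = 0) (hTB : minkDot T B = 0) (hNB : minkDot N B = 0)
    (x y z x' y' z' : ℝ)
    (h : x • T + y • N + z • B = x' • T + y' • N + z' • B) :
    x = x' ∧ y = y' ∧ z = z' := by
  have hTe := congrArg (fun X => minkDot X T) h
  have hNe := congrArg (fun X => minkDot X N) h
  have hBe := congrArg (fun X => minkDot X B) h
  simp only [minkDot_expand] at hTe hNe hBe
  rw [minkDot_comm N T, minkDot_comm B T] at hTe
  rw [minkDot_comm B N] at hNe
  rw [hTT, hTN, hTB] at *
  rw [hNN, hNB] at *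
  rw [hBB] at *
  refine ⟨by linarith, by linarith, by linarith⟩

/-- The curve is a line of curvature iff the marching-scale functions satisfy the
`φ`-conditions with a nonvanishing function `λ`. -/
theorem line_of_curvature_iff_timelike
    (r T N B : ℝ → ℝ × ℝ × ℝ) (κ τ : ℝ → ℝ)
    (hr : ContDiff ℝ (⊤ : ℕ∞) r) (hT : ContDiff ℝ (⊤ : ℕ∞) T) (hN : ContDiff ℝ (⊤ : ℕ∞) N)
    (hB : ContDiff ℝ (⊤ : ℕ∞) B) (hκ : ContDiff ℝ (⊤ : ℕ∞) κ) (hτ : ContDiff ℝ (⊤ : ℕ∞) τ)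
    (hrT : ∀ s, deriv r s = T s)
    (hT' : ∀ s, deriv T s = κ s • N s)
    (hN' : ∀ s, deriv N s = κ s • T s - τ s • B s)
    (hB' : ∀ s, deriv B s = τ s • N s)
    (hTT : ∀ s, minkDot (T s) (T s) = -1)
    (hNN : ∀ s, minkDot (N s) (N s) = 1)
    (hBB : ∀ s, minkDot (B s) (B s) = 1)
    (hTN : ∀ s, minkDot (T s) (N s) = 0)
    (hTB : ∀ s, minkDot (T s) (B s) = 0)
    (hNB : ∀ s, minkDot (N s) (B s) = 0)
    (hTxN : ∀ s, lcross (T s) (N s) = -B s)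
    (hNxB : ∀ s, lcross (N s) (B s) = T s)
    (hBxT : ∀ s, lcross (B s) (T s) = -N s)
    (u v w : ℝ → ℝ → ℝ)
    (hu : ContDiff ℝ (⊤ : ℕ∞) (Function.uncurry u))
    (hv : ContDiff ℝ (⊤ : ℕ∞) (Function.uncurry v))
    (hw : ContDiff ℝ (⊤ : ℕ∞) (Function.uncurry w))
    (t₀ : ℝ) (P n : ℝ → ℝ → ℝ × ℝ × ℝ)
    (hP : ∀ s t, P s t = r s + u s t • T s + v s t • N s + w s t • B s)
    (hn : ∀ s t, n s t = lcross (deriv (fun σ => P σ t) s) (deriv (fun t' => P s t') t))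
    (h0 : ∀ s, u s t₀ = 0 ∧ v s t₀ = 0 ∧ w s t₀ = 0)
    (θ₀ : ℝ) (θ : ℝ → ℝ) (hθ : ∀ s, θ s = θ₀ + ∫ σ in (0:ℝ)..s, τ σ)
    (n₁ : ℝ → ℝ × ℝ × ℝ)
    (hn₁ : ∀ s, n₁ s = Real.cos (θ s) • N s + Real.sin (θ s) • B s) :
    (∀ s, ∃ c : ℝ, c ≠ 0 ∧ n s t₀ = c • n₁ s) ↔
      (∃ lam : ℝ → ℝ, (∀ s, lam s ≠ 0) ∧ ∀ s,
        (deriv (fun σ => v σ t₀) s * deriv (fun t => w s t) t₀ - deriv (fun σ => w σ t₀) s * deriv (fun t => v s t) t₀) = 0 ∧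
        ((1 + deriv (fun σ => u σ t₀) s) * deriv (fun t => w s t) t₀ - deriv (fun σ => w σ t₀) s * deriv (fun t => u s t) t₀) = lam s * Real.cos (θ s) ∧
        (deriv (fun σ => v σ t₀) s * deriv (fun t => u s t) t₀ - (1 + deriv (fun σ => u σ t₀) s) * deriv (fun t => v s t) t₀) = lam s * Real.sin (θ s)) := by
  -- differentiability of the marching-scale functions in each variable
  have hd1 : ∀ (f : ℝ → ℝ → ℝ), ContDiff ℝ (⊤ : ℕ∞) (Function.uncurry f) →
      ∀ t, Differentiable ℝ (fun σ : ℝ => f σ t) := by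
    intro f hf t
    have h : (fun σ : ℝ => f σ t) = Function.uncurry f ∘ (fun σ => (σ, t)) := rfl
    rw [h]
    exact (hf.comp (contDiff_id.prodMk contDiff_const)).differentiable (by simp)
  have hd2 : ∀ (f : ℝ → ℝ → ℝ), ContDiff ℝ (⊤ : ℕ∞) (Function.uncurry f) →
      ∀ s, Differentiable ℝ (fun t : ℝ => f s t) := by
    intro f hf s
    have h : (fun t : ℝ => f s t) = Function.uncurry f ∘ (fun t => ((s : ℝ), t)) := rfl
    rw [h]
    exact (hf.comp (contDiff_const.prodMk contDiff_id)).differentiable (by simp)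
  -- the s-derivative of P at (s, t₀)
  have hPs : ∀ s, deriv (fun σ => P σ t₀) s =
      (1 + deriv (fun σ => u σ t₀) s) • T s + deriv (fun σ => v σ t₀) s • N s +
        deriv (fun σ => w σ t₀) s • B s := by
    intro s
    have hfun : (fun σ => P σ t₀) =
        fun σ => r σ + u σ t₀ • T σ + v σ t₀ • N σ + w σ t₀ • B σ :=
      funext fun σ => hP σ t₀
    have Hr : HasDerivAt r (T s) s := by
      have := ((hr.differentiable (by simp)) s).hasDerivAt
      rwa [hrT] at this
    have HT : HasDerivAt T (deriv T s) s := ((hT.differentiable (by simp)) s).hasDerivAt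
    have HN : HasDerivAt N (deriv N s) s := ((hN.differentiable (by simp)) s).hasDerivAt
    have HB : HasDerivAt B (deriv B s) s := ((hB.differentiable (by simp)) s).hasDerivAt
    have Hu : HasDerivAt (fun σ => u σ t₀) (deriv (fun σ => u σ t₀) s) s :=
      ((hd1 u hu t₀) s).hasDerivAt
    have Hv : HasDerivAt (fun σ => v σ t₀) (deriv (fun σ => v σ t₀) s) s :=
      ((hd1 v hv t₀) s).hasDerivAt
    have Hw : HasDerivAt (fun σ => w σ t₀) (deriv (fun σ => w σ t₀) s) s :=
      ((hd1 w hw t₀) s).hasDerivAt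
    have Hall : HasDerivAt (fun σ => r σ + u σ t₀ • T σ + v σ t₀ • N σ + w σ t₀ • B σ)
        ((T s + (u s t₀ • deriv T s + deriv (fun σ => u σ t₀) s • T s)
          + (v s t₀ • deriv N s + deriv (fun σ => v σ t₀) s • N s))
          + (w s t₀ • deriv B s + deriv (fun σ => w σ t₀) s • B s)) s :=
      ((Hr.add (Hu.smul HT)).add (Hv.smul HN)).add (Hw.smul HB)
    rw [hfun, Hall.deriv, (h0 s).1, (h0 s).2.1, (h0 s).2.2]
    simp only [zero_smul, zero_add, add_zero]
    module
  -- the t-derivative of P at (s, t₀)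
  have hPt : ∀ s, deriv (fun t' => P s t') t₀ =
      deriv (fun t => u s t) t₀ • T s + deriv (fun t => v s t) t₀ • N s +
        deriv (fun t => w s t) t₀ • B s := by
    intro s
    have hfun : (fun t' => P s t') =
        fun t' => r s + u s t' • T s + v s t' • N s + w s t' • B s :=
      funext fun t' => hP s t'
    have Hu : HasDerivAt (fun t => u s t) (deriv (fun t => u s t) t₀) t₀ :=
      ((hd2 u hu s) t₀).hasDerivAt
    have Hv : HasDerivAt (fun t => v s t) (deriv (fun t => v s t) t₀) t₀ :=
      ((hd2 v hv s) t₀).hasDerivAt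
    have Hw : HasDerivAt (fun t => w s t) (deriv (fun t => w s t) t₀) t₀ :=
      ((hd2 w hw s) t₀).hasDerivAt
    have Hall : HasDerivAt (fun t' => r s + u s t' • T s + v s t' • N s + w s t' • B s)
        (((0 + deriv (fun t => u s t) t₀ • T s) + deriv (fun t => v s t) t₀ • N s)
          + deriv (fun t => w s t) t₀ • B s) t₀ :=
      (((hasDerivAt_const t₀ (r s)).add (Hu.smul_const (T s))).add
        (Hv.smul_const (N s))).add (Hw.smul_const (B s))
    rw [hfun, Hall.deriv, zero_add]
  -- the normal along the curve in the frame
  have key : ∀ s, n s t₀ =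
      (deriv (fun σ => v σ t₀) s * deriv (fun t => w s t) t₀ -
        deriv (fun σ => w σ t₀) s * deriv (fun t => v s t) t₀) • T s +
      ((1 + deriv (fun σ => u σ t₀) s) * deriv (fun t => w s t) t₀ -
        deriv (fun σ => w σ t₀) s * deriv (fun t => u s t) t₀) • N s +
      (deriv (fun σ => v σ t₀) s * deriv (fun t => u s t) t₀ -
        (1 + deriv (fun σ => u σ t₀) s) * deriv (fun t => v s t) t₀) • B s := by
    intro s
    rw [hn s t₀, hPs s, hPt s,
      lcross_expand_s15 (1 + deriv (fun σ => u σ t₀) s) (deriv (fun σ => v σ t₀) s)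
        (deriv (fun σ => w σ t₀) s) (deriv (fun t => u s t) t₀)
        (deriv (fun t => v s t) t₀) (deriv (fun t => w s t) t₀)
        (T s) (N s) (B s) (hTxN s) (hNxB s) (hBxT s)]
  constructor
  · intro h
    choose c hc hceq using h
    refine ⟨c, hc, fun s => ?_⟩
    have h2 : c s • n₁ s = (0:ℝ) • T s + (c s * Real.cos (θ s)) • N s +
        (c s * Real.sin (θ s)) • B s := by
      rw [hn₁]; module
    have h3 := (hceq s).symm.trans (key s)
    rw [h2] at h3
    obtain ⟨e1, e2, e3⟩ := coeff_ext (T s) (N s) (B s) (hTT s) (hNN s) (hBB s)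
      (hTN s) (hTB s) (hNB s) _ _ _ _ _ _ h3
    exact ⟨e1.symm, e2.symm, e3.symm⟩
  · rintro ⟨lam, hlam, heq⟩ s
    obtain ⟨e1, e2, e3⟩ := heq s
    refine ⟨lam s, hlam s, ?_⟩
    rw [key s, e1, e2, e3, hn₁]
    module
end
end

section
/- Define the surface P(s,t) = (cos s − sin t · sin s, sin s + cos s · sin t, sinh(t·s)). Then P(s,0) = (cos s, sin s, 0) for all s, and the Lorentzian normal vector along t = 0 satisfies (∂P/∂s)(s,0) × (∂P/∂t)(s,0) = (s·cos s, s·sin s, 0) = −s·N(s), where N(s) = (−cos s, −sin s, 0) is the principal normal of the circle s ↦ (cos s, sin s, 0); in particular, for every s ≠ 0 the surface normal at (s,0) is a nonzero scalar multiple of N(s). -/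
noncomputable section

open Real

theorem hasDerivAt_circle (s : ℝ) :
    HasDerivAt (fun σ : ℝ => ((cos σ, sin σ, 0) : ℝ × ℝ × ℝ)) (-sin s, cos s, 0) s :=
  (hasDerivAt_cos s).prodMk ((hasDerivAt_sin s).prodMk (hasDerivAt_const s 0))

theorem hasDerivAt_surface_snd (s t : ℝ) :
    HasDerivAt (fun τ : ℝ => ((cos s - sin τ * sin s, sin s + cos s * sin τ, sinh (τ * s)) :
        ℝ × ℝ × ℝ))
      (-(cos t * sin s), cos s * cos t, cosh (t * s) * s) t :=
  ((hasDerivAt_sin t).mul_const (sin s)).const_sub (cos s) |>.prodMk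
    ((((hasDerivAt_sin t).const_mul (cos s)).const_add (sin s)).prodMk (hasDerivAt_mul_const s).sinh)

theorem lcross_mk_zero_mk (x y a : ℝ) :
    lcross (x, y, 0) (x, y, a) = (a * y, -(a * x), 0) := by
  simp only [lcross, Prod.mk.injEq]
  refine ⟨?_, ?_, ?_⟩ <;> ring

/-- A member of the surface pencil through the circle with its normal along `t = 0`. -/
theorem example_surface_normal_along_circle
    (P : ℝ → ℝ → ℝ × ℝ × ℝ)
    (hP : ∀ s t, P s t = (Real.cos s - Real.sin t * Real.sin s,
      Real.sin s + Real.cos s * Real.sin t, Real.sinh (t * s)))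
    (N : ℝ → ℝ × ℝ × ℝ)
    (hN : ∀ s, N s = (-Real.cos s, -Real.sin s, 0)) :
    ∀ s,
      P s 0 = (Real.cos s, Real.sin s, 0) ∧
      lcross (deriv (fun σ => P σ 0) s) (deriv (fun t => P s t) 0)
        = (s * Real.cos s, s * Real.sin s, 0) ∧
      ((s * Real.cos s, s * Real.sin s, (0 : ℝ)) : ℝ × ℝ × ℝ) = (-s) • N s ∧
      (s ≠ 0 → ∃ c : ℝ, c ≠ 0 ∧
        lcross (deriv (fun σ => P σ 0) s) (deriv (fun t => P s t) 0) = c • N s) := by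
  intro s
  have hP₀ : ∀ σ, P σ 0 = (cos σ, sin σ, 0) := fun σ => by simp [hP]
  have hPs : deriv (fun σ => P σ 0) s = (-sin s, cos s, 0) := by
    simpa only [hP₀] using (hasDerivAt_circle s).deriv
  have hPt : deriv (fun t => P s t) 0 = (-sin s, cos s, s) := by
    simpa [hP] using (hasDerivAt_surface_snd s 0).deriv
  have hnormal : lcross (deriv (fun σ => P σ 0) s) (deriv (fun t => P s t) 0)
      = (s * cos s, s * sin s, 0) := by
    rw [hPs, hPt, lcross_mk_zero_mk]
    simp
  have hsmul : ((s * cos s, s * sin s, (0 : ℝ)) : ℝ × ℝ × ℝ) = (-s) • N s := by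
    simp [hN]
  exact ⟨hP₀ s, hnormal, hsmul, fun hs => ⟨-s, neg_ne_zero.mpr hs, hnormal.trans hsmul⟩⟩
end
end
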